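/- arXiv:0906.0453 — 4 statements merged into one kernel-verified Lean document; each statement's English description precedes it below -/
import Mathlib

section
/- For a nonempty convex subset U of a separated locally convex space X and a point x in U, x belongs to the quasi interior of U if and only if the normal cone N_U(x) equals {0}. -/
open Set Pointwise Topology

/-- The conic hull: cone(S) = ⋃_{t ≥ 0} t • S. -/
def coneHull {E : Type*} [AddCommGroup E] [Module ℝ E] (S : Set E) : Set E :=
  {x | ∃ t : ℝ, 0 ≤ t ∧ ∃ s ∈ S, x = t • s}

/-- The quasi-relative interior. -/
def qri {E : Type*} [AddCommGroup E] [Module ℝ E] [TopologicalSpace E] (U : Set E) : Set E :=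
  {x | x ∈ U ∧ ∃ M : Submodule ℝ E, closure (coneHull (U - {x})) = (M : Set E)}

/-- The quasi interior. -/
def qi {E : Type*} [AddCommGroup E] [Module ℝ E] [TopologicalSpace E] (U : Set E) : Set E :=
  {x | x ∈ U ∧ closure (coneHull (U - {x})) = Set.univ}

/-- The algebraic interior (core). -/
def algCore {E : Type*} [AddCommGroup E] [Module ℝ E] (U : Set E) : Set E :=
  {x | x ∈ U ∧ coneHull (U - {x}) = Set.univ}

/-- The relative algebraic interior (intrinsic core). -/
def icr {E : Type*} [AddCommGroup E] [Module ℝ E] (U : Set E) : Set E :=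
  {x | x ∈ U ∧ ∃ M : Submodule ℝ E, coneHull (U - {x}) = (M : Set E)}

/-- The strong quasi-relative interior. -/
def sqri {E : Type*} [AddCommGroup E] [Module ℝ E] [TopologicalSpace E] (U : Set E) : Set E :=
  {x | x ∈ U ∧ ∃ M : Submodule ℝ E, coneHull (U - {x}) = (M : Set E) ∧ IsClosed (M : Set E)}

/-- The normal cone of U at x. -/
def normalCone {E : Type*} [AddCommGroup E] [Module ℝ E] [TopologicalSpace E]
    (U : Set E) (x : E) : Set (E →L[ℝ] ℝ) :=
  {f | ∀ y ∈ U, f (y - x) ≤ 0}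

/-! A functional lies in `normalCone U x` exactly when it is nonpositive on the closed convex
cone generated by `U - x`. If that cone is all of `X`, such a functional is `0`; otherwise
Hahn–Banach separation (Farkas' lemma) gives a nonzero one, since a functional separating a cone
from a point can be taken nonpositive on the cone. -/

section

variable {E : Type*} [AddCommGroup E] [Module ℝ E]

lemma coneHull_eq_hull {S : Set E} (hS : Convex ℝ S) (h0 : (0 : E) ∈ S) :
    coneHull S = ConvexCone.hull ℝ S := by
  ext v
  rw [SetLike.mem_coe, ConvexCone.mem_hull_of_convex hS]
  constructor
  · rintro ⟨t, ht, s, hs, rfl⟩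
    rcases ht.eq_or_lt with rfl | ht
    · exact ⟨1, one_pos, by simpa using h0⟩
    · exact ⟨t, ht, smul_mem_smul_set hs⟩
  · rintro ⟨t, ht, s, hs, rfl⟩
    exact ⟨t, ht.le, s, hs, rfl⟩

lemma LinearMap.eq_zero_of_forall_nonpos {f : E →ₗ[ℝ] ℝ} (hf : ∀ v, f v ≤ 0) :
    f = 0 := by
  refine LinearMap.ext fun v => le_antisymm (hf v) ?_
  simpa using hf (-v)

variable [TopologicalSpace E]

lemma mem_normalCone_iff_forall_closure_coneHull {U : Set E} {x : E} {f : E →L[ℝ] ℝ} :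
    f ∈ normalCone U x ↔ ∀ v ∈ closure (coneHull (U - {x})), f v ≤ 0 := by
  refine ⟨fun hf => closure_minimal ?_ (isClosed_le f.continuous continuous_const),
    fun hf y hy => hf _ <|
      subset_closure ⟨1, zero_le_one, _, sub_mem_sub hy rfl, (one_smul ℝ _).symm⟩⟩
  rintro _ ⟨t, ht, _, ⟨y, hy, _, rfl, rfl⟩, rfl⟩
  show f (t • (y - _)) ≤ 0
  rw [map_smul, smul_eq_mul]
  exact mul_nonpos_of_nonneg_of_nonpos ht (hf y hy)

lemma ConvexCone.exists_nonpos_of_notMem_closure [IsTopologicalAddGroup E] [ContinuousSMul ℝ E]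
    [LocallyConvexSpace ℝ E] {K : ConvexCone ℝ E} (hK : K.Pointed) {z : E}
    (hz : z ∉ closure (K : Set E)) :
    ∃ f : StrongDual ℝ E, (∀ v ∈ closure (K : Set E), f v ≤ 0) ∧ 0 < f z := by
  obtain ⟨f, hf, hfz⟩ := ProperCone.hyperplane_separation_point
    ⟨(K.toPointedCone hK).closure, isClosed_closure⟩ (x₀ := z) hz
  exact ⟨-f, fun v hv => by simpa using hf v hv, by simpa using hfz⟩

end

theorem qi_iff_normalCone_eq_zero_general
    {X : Type*} [AddCommGroup X] [Module ℝ X] [TopologicalSpace X]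
    [IsTopologicalAddGroup X] [ContinuousSMul ℝ X] [LocallyConvexSpace ℝ X]
    (U : Set X) (hconv : Convex ℝ U) (x : X) (hx : x ∈ U) :
    x ∈ qi U ↔ normalCone U x = {0} := by
  constructor
  · rintro ⟨-, hcl⟩
    refine Set.eq_singleton_iff_unique_mem.2 ⟨fun y _ => by simp, fun f hf => ?_⟩
    have hle := mem_normalCone_iff_forall_closure_coneHull.1 hf
    rw [hcl] at hle
    exact ContinuousLinearMap.coe_injective
      (LinearMap.eq_zero_of_forall_nonpos fun v => hle v trivial)
  · intro hN
    refine ⟨hx, Set.eq_univ_of_forall fun z => by_contra fun hz => ?_⟩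
    have h0 : (0 : X) ∈ U - {x} := ⟨x, hx, x, rfl, sub_self x⟩
    have hcone := coneHull_eq_hull (hconv.sub (convex_singleton x)) h0
    rw [hcone] at hz
    obtain ⟨f, hfK, hfz⟩ :=
      ConvexCone.exists_nonpos_of_notMem_closure (ConvexCone.subset_hull h0) hz
    have hfN : f ∈ normalCone U x := by
      rwa [mem_normalCone_iff_forall_closure_coneHull, hcone]
    rw [hN, Set.mem_singleton_iff] at hfN
    simp [hfN] at hfz

theorem qi_iff_normalCone_eq_zero
    {X : Type*} [AddCommGroup X] [Module ℝ X] [TopologicalSpace X]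
    [IsTopologicalAddGroup X] [ContinuousSMul ℝ X] [LocallyConvexSpace ℝ X] [T2Space X]
    (U : Set X) (hne : U.Nonempty) (hconv : Convex ℝ U) (x : X) (hx : x ∈ U) :
    x ∈ qi U ↔ normalCone U x = {0} :=
  qi_iff_normalCone_eq_zero_general U hconv x hx
end

section
/- Let U be a nonempty convex subset of a separated locally convex space X with qri(U) ≠ ∅. Then cl(qri(U)) = cl(U). -/
open Set Pointwise Topology

/-!
Accessibility: if `a ∈ qri U` and `u ∈ U`, every `z` in the open segment `(a, u)` is in `qri U`.
Indeed `cone (U - a) ⊆ cone (U - z)`, as `z` lies strictly between `a` and `u`; conversely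
`U - z` lies in the closed subspace `cl (cone (U - a))`, which contains all differences of
points of `U`. Letting `z → u` gives `U ⊆ cl (qri U)`.
-/

section ConeHull

variable {E : Type*} [AddCommGroup E] [Module ℝ E] {S T : Set E}

lemma subset_coneHull : S ⊆ coneHull S :=
  fun s hs => ⟨1, zero_le_one, s, hs, (one_smul ℝ s).symm⟩

lemma coneHull_subset_coneHull_of_subset (h : S ⊆ coneHull T) : coneHull S ⊆ coneHull T := by
  rintro _ ⟨t, ht, s, hs, rfl⟩
  obtain ⟨r, hr, x, hx, rfl⟩ := h hs
  exact ⟨t * r, mul_nonneg ht hr, x, hx, (mul_smul t r x).symm⟩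

lemma coneHull_subset_submodule {M : Submodule ℝ E} (h : S ⊆ M) : coneHull S ⊆ M := by
  rintro _ ⟨t, -, s, hs, rfl⟩
  exact M.smul_mem t (h hs)

end ConeHull

lemma qri_subset {E : Type*} [AddCommGroup E] [Module ℝ E] [TopologicalSpace E] (U : Set E) :
    qri U ⊆ U :=
  fun _ hx => hx.1

lemma Convex.openSegment_subset_qri {E : Type*} [AddCommGroup E] [Module ℝ E]
    [TopologicalSpace E] {U : Set E} (hconv : Convex ℝ U) {a u : E} (ha : a ∈ qri U)
    (hu : u ∈ U) : openSegment ℝ a u ⊆ qri U := by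
  rintro _ ⟨s, t, hs, ht, hst, rfl⟩
  obtain ⟨haU, M, hM⟩ := ha
  set z := s • a + t • u
  have hzU : z ∈ U := hconv haU hu hs.le ht.le hst
  refine ⟨hzU, M, ?_⟩
  rw [sub_singleton] at hM ⊢
  have hUa : (· - a) '' U ⊆ M := hM ▸ subset_coneHull.trans subset_closure
  refine subset_antisymm ?_ ?_
  · have hUz : (· - z) '' U ⊆ M := by
      rintro _ ⟨w, hw, rfl⟩
      show w - z ∈ M
      rw [← sub_sub_sub_cancel_right w z a]
      exact M.sub_mem (hUa ⟨w, hw, rfl⟩) (hUa ⟨z, hzU, rfl⟩)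
    exact closure_minimal (coneHull_subset_submodule hUz) (hM ▸ isClosed_closure)
  · rw [← hM]
    refine closure_mono (coneHull_subset_coneHull_of_subset ?_)
    rintro _ ⟨w, hw, rfl⟩
    -- s • (w - a) is the difference of two points of U, one of them z
    have hw' : s • w + t • u ∈ U := hconv hw hu hs.le ht.le hst
    refine ⟨s⁻¹, inv_nonneg.mpr hs.le, s • w + t • u - z, ⟨_, hw', rfl⟩, ?_⟩
    rw [show s • w + t • u - z = s • (w - a) by simp only [z]; module, smul_smul,
      inv_mul_cancel₀ hs.ne', one_smul]

theorem closure_qri_eq_closure_general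
    {X : Type*} [AddCommGroup X] [Module ℝ X] [TopologicalSpace X]
    [IsTopologicalAddGroup X] [ContinuousSMul ℝ X]
    (U : Set X) (hconv : Convex ℝ U) (hqri : (qri U).Nonempty) :
    closure (qri U) = closure U := by
  obtain ⟨a, ha⟩ := hqri
  refine (closure_mono (qri_subset U)).antisymm (closure_minimal (fun u hu => ?_) isClosed_closure)
  exact closure_mono (hconv.openSegment_subset_qri ha hu)
    (segment_subset_closure_openSegment (right_mem_segment ℝ a u))

theorem closure_qri_eq_closure
    {X : Type*} [AddCommGroup X] [Module ℝ X] [TopologicalSpace X]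
    [IsTopologicalAddGroup X] [ContinuousSMul ℝ X] [LocallyConvexSpace ℝ X] [T2Space X]
    (U : Set X) (hne : U.Nonempty) (hconv : Convex ℝ U) (hqri : (qri U).Nonempty) :
    closure (qri U) = closure U :=
  closure_qri_eq_closure_general U hconv hqri
end

section
/- Let X = ℓ²(ℕ), C = {x ∈ ℓ² : x_{2n−1} + x_{2n} = 0 ∀n} and S = {x ∈ ℓ² : x_{2n} + x_{2n+1} = 0 ∀n}. Then C and S are closed linear subspaces of ℓ², C ∩ S = {0}, and C − S is dense in ℓ² (hence 0 ∈ qi(C − S)) but C − S ≠ ℓ². -/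
open Set Pointwise Topology

/-!
Both subspaces are cut out by continuous coordinate equations, hence closed. On `C ∩ S`
consecutive coordinates are opposite, so all have the same modulus, which must be `0` since the
coordinates of an `ℓ²` sequence tend to `0`. Every unit vector `e j` lies in `C + S = C - S`:
`e 0 ∈ S`, and `e j - e (j + 1)` lies in `C` or in `S` according to the parity of `j`. So `C - S` is
a dense subspace, and `0 ∈ qi (C - S)` because the cone it generates is itself. Finally, if
`z = u - v` with `u ∈ C` and `v ∈ S`, then `u (2n) - u 0 = ∑_{k<n} (z (2k+1) + z (2k+2))`, and
`u (2n) → 0` makes this series converge; it diverges for `z (2k+1) = 1/(k+1)`, `z (2k) = 0`.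
-/

open Filter
open scoped ENNReal

section lp

variable {α : Type*} {E : α → Type*} [∀ i, NormedAddCommGroup (E i)] {p : ℝ≥0∞}

theorem Memℓp.tendsto_norm_cofinite_zero (hp : 0 < p.toReal) {f : ∀ i, E i} (hf : Memℓp f p) :
    Tendsto (fun i => ‖f i‖) cofinite (𝓝 0) := by
  have hcont : ContinuousAt (fun t : ℝ => t ^ p.toReal⁻¹) 0 :=
    Real.continuousAt_rpow_const _ _ (Or.inr (inv_pos.2 hp).le)
  have h := hcont.tendsto.comp (hf.summable hp).tendsto_cofinite_zero
  rw [Real.zero_rpow (inv_ne_zero hp.ne')] at h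
  exact h.congr fun i => Real.rpow_rpow_inv (norm_nonneg _) hp.ne'

theorem lp.dense_of_forall_single_mem [DecidableEq α] [Fact (1 ≤ p)] (hp : p ≠ ∞)
    (G : AddSubgroup (lp E p)) (hG : ∀ i a, lp.single p i a ∈ G) : Dense (G : Set (lp E p)) :=
  fun f => mem_closure_of_tendsto (lp.hasSum_single hp f)
    (Eventually.of_forall fun _ => G.sum_mem fun i _ => hG i (f i))

theorem lp.eq_zero_of_norm_succ_eq {E : ℕ → Type*} [∀ i, NormedAddCommGroup (E i)]
    (hp : 0 < p.toReal) (f : lp E p) (h : ∀ n, ‖f (n + 1)‖ = ‖f n‖) : f = 0 := by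
  have hconst : ∀ n, ‖f n‖ = ‖f 0‖ := fun n => Nat.rec rfl (fun n ih => (h n).trans ih) n
  have hlim : Tendsto (fun _ : ℕ => ‖f 0‖) atTop (𝓝 0) := by
    simpa [hconst, Nat.cofinite_eq_atTop] using (lp.memℓp f).tendsto_norm_cofinite_zero hp
  have h0 : ‖f 0‖ = 0 := tendsto_nhds_unique tendsto_const_nhds hlim
  ext n
  rw [lp.coeFn_zero, Pi.zero_apply, ← norm_eq_zero, hconst n, h0]

end lp

section Submodule

theorem Submodule.coe_sub_coe {R M : Type*} [Ring R] [AddCommGroup M] [Module R M]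
    (P Q : Submodule R M) : (P : Set M) - Q = ↑(P ⊔ Q) := by
  rw [Submodule.coe_sup, sub_eq_add_neg, Submodule.neg_coe]

variable {E : Type*} [AddCommGroup E] [Module ℝ E]

theorem coneHull_submodule (P : Submodule ℝ E) : coneHull (P : Set E) = P := by
  ext x
  constructor
  · rintro ⟨t, -, s, hs, rfl⟩
    exact P.smul_mem t hs
  · exact fun hx => ⟨1, zero_le_one, x, hx, (one_smul ℝ x).symm⟩

theorem zero_mem_qi_submodule_iff [TopologicalSpace E] (P : Submodule ℝ E) :
    (0 : E) ∈ qi (P : Set E) ↔ Dense (P : Set E) := by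
  simp [qi, Set.sub_singleton, coneHull_submodule, dense_iff_closure_eq]

end Submodule

section PairCancel

variable {p : ℝ≥0∞}

/-- The paper's `C` and `S` are `pairCancel 2 0` and `pairCancel 2 1`. -/
def pairCancel (p : ℝ≥0∞) (k : ℕ) : Submodule ℝ (lp (fun _ : ℕ => ℝ) p) where
  carrier := {x | ∀ n, x (2 * n + k) + x (2 * n + k + 1) = 0}
  add_mem' {x y} hx hy n := by
    simp only [lp.coeFn_add, Pi.add_apply]
    linarith [hx n, hy n]
  zero_mem' n := by simp
  smul_mem' c x hx n := by
    simp only [lp.coeFn_smul, Pi.smul_apply, smul_eq_mul, ← mul_add, hx n, mul_zero]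

theorem isClosed_pairCancel [Fact (1 ≤ p)] (k : ℕ) :
    IsClosed (pairCancel p k : Set (lp (fun _ : ℕ => ℝ) p)) := by
  have hcoord (i : ℕ) : Continuous fun x : lp (fun _ : ℕ => ℝ) p => x i :=
    (continuous_apply i).comp lp.uniformContinuous_coe.continuous
  show IsClosed {x : lp (fun _ : ℕ => ℝ) p | ∀ n, x (2 * n + k) + x (2 * n + k + 1) = 0}
  rw [Set.ofPred_forall]
  exact isClosed_iInter fun n => isClosed_eq ((hcoord _).add (hcoord _)) continuous_const

theorem succ_eq_neg_of_mem_pairCancel {x : lp (fun _ : ℕ => ℝ) p} (h₀ : x ∈ pairCancel p 0)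
    (h₁ : x ∈ pairCancel p 1) (n : ℕ) : x (n + 1) = -x n := by
  obtain ⟨m, rfl | rfl⟩ := Nat.even_or_odd' n
  · have h : x (2 * m) + x (2 * m + 1) = 0 := h₀ m
    linarith
  · have h : x (2 * m + 1) + x (2 * m + 1 + 1) = 0 := h₁ m
    linarith

theorem pairCancel_zero_inf_one (hp : 0 < p.toReal) : pairCancel p 0 ⊓ pairCancel p 1 = ⊥ := by
  refine eq_bot_iff.2 fun x ⟨h₀, h₁⟩ => (Submodule.mem_bot ℝ).2 ?_
  exact lp.eq_zero_of_norm_succ_eq hp x fun n => by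
    rw [succ_eq_neg_of_mem_pairCancel h₀ h₁, norm_neg]

theorem single_zero_mem_pairCancel_one : lp.single p 0 (1 : ℝ) ∈ pairCancel p 1 := by
  intro n
  simp [lp.single_apply]

theorem single_sub_single_mem_pairCancel (m k : ℕ) :
    lp.single p (2 * m + k) (1 : ℝ) - lp.single p (2 * m + k + 1) 1 ∈ pairCancel p k := by
  intro n
  simp only [lp.coeFn_sub, Pi.sub_apply, lp.single_apply, Pi.single_apply]
  split_ifs <;> first | omega | norm_num

theorem single_sub_single_succ_mem_sup (j : ℕ) :
    lp.single p j (1 : ℝ) - lp.single p (j + 1) 1 ∈ pairCancel p 0 ⊔ pairCancel p 1 := by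
  obtain ⟨m, rfl | rfl⟩ := Nat.even_or_odd' j
  · exact Submodule.mem_sup_left (single_sub_single_mem_pairCancel m 0)
  · exact Submodule.mem_sup_right (single_sub_single_mem_pairCancel m 1)

theorem single_mem_sup (j : ℕ) : lp.single p j (1 : ℝ) ∈ pairCancel p 0 ⊔ pairCancel p 1 := by
  induction j with
  | zero => exact Submodule.mem_sup_right single_zero_mem_pairCancel_one
  | succ j ih => simpa using Submodule.sub_mem _ ih (single_sub_single_succ_mem_sup j)

theorem dense_pairCancel_sup [Fact (1 ≤ p)] (hp : p ≠ ∞) :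
    Dense ((pairCancel p 0 ⊔ pairCancel p 1 : Submodule ℝ _) : Set (lp (fun _ : ℕ => ℝ) p)) :=
  lp.dense_of_forall_single_mem hp (pairCancel p 0 ⊔ pairCancel p 1).toAddSubgroup fun j a => by
    simpa [← lp.single_smul] using (pairCancel p 0 ⊔ pairCancel p 1).smul_mem a (single_mem_sup j)

theorem apply_two_mul_eq_add_sum {u z : lp (fun _ : ℕ => ℝ) p} (hu : u ∈ pairCancel p 0)
    (hv : u - z ∈ pairCancel p 1) (n : ℕ) :
    u (2 * n) = u 0 + ∑ k ∈ Finset.range n, (z (2 * k + 1) + z (2 * k + 2)) := by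
  induction n with
  | zero => simp
  | succ n ih =>
    have h₀ : u (2 * n) + u (2 * n + 1) = 0 := hu n
    have h₁ : (u - z) (2 * n + 1) + (u - z) (2 * n + 2) = 0 := hv n
    simp only [lp.coeFn_sub, Pi.sub_apply] at h₁
    rw [Finset.sum_range_succ, ← add_assoc, ← ih, mul_add, mul_one]
    linarith

theorem not_tendsto_sum_atTop_of_mem_sub (hp : 0 < p.toReal) {z : lp (fun _ : ℕ => ℝ) p}
    (hz : z ∈ (pairCancel p 0 : Set (lp (fun _ : ℕ => ℝ) p)) - (pairCancel p 1 : Set _)) :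
    ¬Tendsto (fun n => ∑ k ∈ Finset.range n, (z (2 * k + 1) + z (2 * k + 2))) atTop atTop := by
  obtain ⟨u, hu, v, hv, rfl⟩ := hz
  intro htop
  have hzero : Tendsto (fun n => u (2 * n)) atTop (𝓝 0) := by
    have h := ((lp.memℓp u).tendsto_norm_cofinite_zero hp).comp
      (mul_right_injective₀ (two_ne_zero' ℕ)).tendsto_cofinite
    rw [Nat.cofinite_eq_atTop] at h
    exact tendsto_zero_iff_norm_tendsto_zero.2 h
  have hv' : u - (u - v) ∈ pairCancel p 1 := by rwa [sub_sub_cancel]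
  have hinf : Tendsto (fun n => u (2 * n)) atTop atTop :=
    (tendsto_atTop_add_const_left _ (u 0) htop).congr fun n =>
      (apply_two_mul_eq_add_sum hu hv' n).symm
  exact not_tendsto_nhds_of_tendsto_atTop hinf 0 hzero

noncomputable def oddHarmonic (n : ℕ) : ℝ := if n % 2 = 1 then 2 / (n + 1) else 0

theorem oddHarmonic_add_oddHarmonic (k : ℕ) :
    oddHarmonic (2 * k + 1) + oddHarmonic (2 * k + 2) = 1 / (k + 1) := by
  have h₁ : (2 * k + 1) % 2 = 1 := by omega
  have h₂ : ¬(2 * k + 2) % 2 = 1 := by omega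
  rw [oddHarmonic, oddHarmonic, if_pos h₁, if_neg h₂, add_zero]
  push_cast
  field_simp
  ring

theorem memℓp_oddHarmonic (hp : 1 < p.toReal) : Memℓp oddHarmonic p := by
  have hp₀ : 0 < p.toReal := by linarith
  have hsum : Summable fun n : ℕ => (2 / ((n : ℝ) + 1)) ^ p.toReal := by
    refine (((Real.summable_one_div_nat_add_rpow 1 _).2 hp).mul_left (2 ^ p.toReal)).congr
      fun n => ?_
    rw [abs_of_pos (by positivity), Real.div_rpow zero_le_two (by positivity)]
    ring
  refine memℓp_gen (hsum.of_nonneg_of_le (fun n => by positivity) fun n => ?_)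
  refine Real.rpow_le_rpow (norm_nonneg _) ?_ hp₀.le
  unfold oddHarmonic
  split_ifs
  · rw [Real.norm_of_nonneg (by positivity)]
  · rw [norm_zero]
    positivity

theorem pairCancel_sub_ne_univ (hp : 1 < p.toReal) :
    (pairCancel p 0 : Set (lp (fun _ : ℕ => ℝ) p)) - (pairCancel p 1 : Set _) ≠ Set.univ :=
  fun h => not_tendsto_sum_atTop_of_mem_sub (z := ⟨oddHarmonic, memℓp_oddHarmonic hp⟩) (by linarith)
    (h ▸ Set.mem_univ _) (by simpa [oddHarmonic_add_oddHarmonic] using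
      Real.tendsto_sum_range_one_div_nat_succ_atTop)

end PairCancel

/-- C = {x ∈ ℓ² : x_{2n-1} + x_{2n} = 0 ∀ n ≥ 1}, in 0-based indexing. -/
theorem gowda_teboulle_example :
    ∃ M N : Submodule ℝ (lp (fun _ : ℕ => ℝ) 2),
      (M : Set (lp (fun _ : ℕ => ℝ) 2)) =
        {x : lp (fun _ : ℕ => ℝ) 2 | ∀ n : ℕ, x (2 * n) + x (2 * n + 1) = 0} ∧
      (N : Set (lp (fun _ : ℕ => ℝ) 2)) =
        {x : lp (fun _ : ℕ => ℝ) 2 | ∀ n : ℕ, x (2 * n + 1) + x (2 * n + 2) = 0} ∧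
      IsClosed (M : Set (lp (fun _ : ℕ => ℝ) 2)) ∧
      IsClosed (N : Set (lp (fun _ : ℕ => ℝ) 2)) ∧
      (M : Set (lp (fun _ : ℕ => ℝ) 2)) ∩ (N : Set (lp (fun _ : ℕ => ℝ) 2)) = {0} ∧
      Dense ((M : Set (lp (fun _ : ℕ => ℝ) 2)) - (N : Set (lp (fun _ : ℕ => ℝ) 2))) ∧
      (0 : lp (fun _ : ℕ => ℝ) 2) ∈ qi ((M : Set (lp (fun _ : ℕ => ℝ) 2)) - (N : Set (lp (fun _ : ℕ => ℝ) 2))) ∧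
      (M : Set (lp (fun _ : ℕ => ℝ) 2)) - (N : Set (lp (fun _ : ℕ => ℝ) 2)) ≠ Set.univ := by
  have hsub := Submodule.coe_sub_coe (pairCancel 2 0) (pairCancel 2 1)
  have hdense := dense_pairCancel_sup (p := 2) ENNReal.ofNat_ne_top
  refine ⟨pairCancel 2 0, pairCancel 2 1, rfl, rfl, isClosed_pairCancel 0, isClosed_pairCancel 1,
    ?_, hsub ▸ hdense, ?_, pairCancel_sub_ne_univ (by norm_num)⟩
  · rw [← Submodule.coe_inf, pairCancel_zero_inf_one (by norm_num), Submodule.bot_coe]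
  · rw [hsub, zero_mem_qi_submodule_iff]
    exact hdense
end

section
/- Let f, g : X → ℝ ∪ {+∞} be proper functions on a separated locally convex space X with v := inf_x {f(x)+g(x)} ∈ ℝ, and suppose the set E := epi f − ep̂i(g − v) = {(x − y, f(x) + g(y) − v + ε) : x ∈ dom f, y ∈ dom g, ε ≥ 0} is convex. If 0 ∈ qi(dom f − dom g) and (0,0) ∉ qri(co(E ∪ {(0,0)})), then v = max_{y*∈X*}{−f*(−y*) − g*(y*)}. -/
open Set Pointwise Topology

/-!
Separating the origin from the closed conic hull of `co (E ∪ {0})`, which is not a subspace,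
gives a functional `(x, r) ↦ x* x + λ r` that is nonnegative on `E` and positive somewhere on
that hull. As `E` is closed under increasing `r`, `λ ≥ 0`. If `λ = 0`, then `x*` is nonnegative
on `dom f − dom g`, hence zero because `0` lies in its quasi interior, and the functional would
vanish. So `λ > 0`, and `y* = x* / λ` satisfies `f x + g y − v ≥ y* (y − x)` on
`dom f × dom g`, that is `−f*(−y*) − g*(y*) ≥ v`; the reverse inequality is weak duality.
-/

theorem EReal.iSup_add_iSup_le {ι κ : Sort*} {u : ι → EReal} {w : κ → EReal} {c : EReal}
    (h : ∀ i j, u i + w j ≤ c) : (⨆ i, u i) + ⨆ j, w j ≤ c :=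
  EReal.add_le_of_forall_lt fun a ha b hb => by
    obtain ⟨i, hi⟩ := lt_iSup_iff.1 ha
    obtain ⟨j, hj⟩ := lt_iSup_iff.1 hb
    exact (add_le_add hi.le hj.le).trans (h i j)

section ConeHull

variable {E : Type*} [AddCommGroup E] [Module ℝ E]

theorem coneHull_eq_coe_hull_of_convex {C : Set E} (hC : Convex ℝ C) (h0 : (0 : E) ∈ C) :
    coneHull C = (ConvexCone.hull ℝ C : Set E) := by
  rw [ConvexCone.coe_hull_of_convex hC]
  ext x
  constructor
  · rintro ⟨t, ht, c, hc, rfl⟩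
    rcases ht.eq_or_lt with rfl | ht
    · exact ⟨1, one_pos, by simpa using h0⟩
    · exact ⟨t, ht, Set.smul_mem_smul_set hc⟩
  · rintro ⟨t, ht, c, hc, rfl⟩
    exact ⟨t, ht.le, c, hc, rfl⟩

omit [Module ℝ E] in
theorem PointedCone.exists_neg_notMem_of_ne_submodule {R : Type*} [Ring R] [LinearOrder R]
    [IsOrderedRing R] [Module R E] (K : PointedCone R E)
    (h : ¬ ∃ M : Submodule R E, (K : Set E) = M) : ∃ x ∈ K, -x ∉ K := by
  by_contra! hneg
  exact h ⟨K.lineal, by ext x; simpa using fun hx => hneg x hx⟩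

variable [TopologicalSpace E]

theorem closure_coneHull_subset_setOf_nonneg (φ : E →L[ℝ] ℝ) {S : Set E}
    (hφ : ∀ s ∈ S, 0 ≤ φ s) : closure (coneHull S) ⊆ {x | 0 ≤ φ x} :=
  closure_minimal (by rintro _ ⟨t, ht, s, hs, rfl⟩; simpa using mul_nonneg ht (hφ s hs))
    (isClosed_le continuous_const φ.continuous)

theorem ContinuousLinearMap.eq_zero_of_nonneg_of_zero_mem_qi {D : Set E} (hD : 0 ∈ qi D)
    {φ : E →L[ℝ] ℝ} (hφ : ∀ d ∈ D, 0 ≤ φ d) : φ = 0 := by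
  have hdense : closure (coneHull D) = univ := by simpa using hD.2
  have hφ_univ : ∀ x, 0 ≤ φ x := fun x =>
    closure_coneHull_subset_setOf_nonneg φ hφ (hdense ▸ mem_univ x)
  ext x
  exact le_antisymm (by simpa using hφ_univ (-x)) (hφ_univ x)

variable [IsTopologicalAddGroup E] [ContinuousSMul ℝ E] [LocallyConvexSpace ℝ E]

theorem exists_nonneg_pos_of_zero_notMem_qri {C : Set E} (hC : Convex ℝ C) (h0 : (0 : E) ∈ C)
    (hqri : 0 ∉ qri C) :
    ∃ φ : E →L[ℝ] ℝ, (∀ c ∈ C, 0 ≤ φ c) ∧ ∃ c ∈ C, 0 < φ c := by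
  let K : ProperCone ℝ E :=
    Submodule.closure ((ConvexCone.hull ℝ C).toPointedCone (ConvexCone.subset_hull h0))
  have hK : (K : Set E) = closure (coneHull C) := by
    rw [coneHull_eq_coe_hull_of_convex hC h0]; rfl
  obtain ⟨k, hk, hnk⟩ := K.toPointedCone.exists_neg_notMem_of_ne_submodule fun ⟨M, hM⟩ =>
    hqri ⟨h0, M, by simpa [hK] using hM⟩
  obtain ⟨φ, hφK, hφk⟩ := K.hyperplane_separation_point hnk
  have hCK : C ⊆ K :=
    hK ▸ fun c hc => subset_closure ⟨1, zero_le_one, c, hc, (one_smul ℝ c).symm⟩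
  refine ⟨φ, fun c hc => hφK c (hCK hc), ?_⟩
  by_contra! hφC
  have := closure_coneHull_subset_setOf_nonneg (-φ) (fun c hc => by simpa using hφC c hc)
    (hK ▸ hk : k ∈ closure (coneHull C))
  simp only [Set.mem_ofPred_eq, neg_apply, map_neg] at this hφk
  linarith

end ConeHull

theorem nonneg_of_forall_nonneg_add_mul {𝕜 : Type*} [Field 𝕜] [LinearOrder 𝕜]
    [IsStrictOrderedRing 𝕜] {a b : 𝕜} (h : ∀ ε : 𝕜, 0 ≤ ε → 0 ≤ a + ε * b) :
    0 ≤ b := by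
  by_contra! hb
  have := h (|a| / -b + 1) (add_nonneg (div_nonneg (abs_nonneg a) (neg_nonneg.2 hb.le)) zero_le_one)
  rw [add_mul, div_mul_eq_mul_div, div_neg, mul_div_cancel_right₀ _ hb.ne] at this
  linarith [le_abs_self a]

section Multiplier

variable {X : Type*} [AddCommGroup X] [Module ℝ X] [TopologicalSpace X]

theorem ContinuousLinearMap.apply_eq_comp_inl_add_mul (ψ : X × ℝ →L[ℝ] ℝ) (p : X × ℝ) :
    ψ p = ψ.comp (.inl ℝ X ℝ) p.1 + p.2 * ψ (0, 1) := by
  calc ψ p = ψ ((p.1, 0) + p.2 • (0, 1)) := by congr 1; ext <;> simp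
    _ = _ := by rw [map_add, map_smul, smul_eq_mul, mul_comm]; rfl

variable [IsTopologicalAddGroup X] [ContinuousSMul ℝ X] [LocallyConvexSpace ℝ X]

theorem exists_clm_nonneg_add_snd_of_zero_notMem_qri {S : Set (X × ℝ)} {D : Set X}
    (hS : ∀ p ∈ S, ∀ ε : ℝ, 0 ≤ ε → p + (0, ε) ∈ S) (hD : D ⊆ Prod.fst '' S)
    (hqi : 0 ∈ qi D) (hqri : 0 ∉ qri (convexHull ℝ (S ∪ {0}))) :
    ∃ y : X →L[ℝ] ℝ, ∀ p ∈ S, 0 ≤ y p.1 + p.2 := by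
  obtain ⟨ψ, hψ, c, -, hψc⟩ := exists_nonneg_pos_of_zero_notMem_qri
    (C := convexHull ℝ (S ∪ {0})) (convex_convexHull ℝ _)
    (subset_convexHull ℝ _ (Or.inr rfl)) hqri
  set x := ψ.comp (.inl ℝ X ℝ)
  set lam := ψ (0, 1)
  have hψ_apply : ∀ p, ψ p = x p.1 + p.2 * lam := ψ.apply_eq_comp_inl_add_mul
  have hψS : ∀ p ∈ S, 0 ≤ x p.1 + p.2 * lam := fun p hp =>
    hψ_apply p ▸ hψ p (subset_convexHull ℝ _ (Or.inl hp))
  obtain ⟨p, hp, -⟩ := hD hqi.1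
  have hlam_nonneg : 0 ≤ lam := nonneg_of_forall_nonneg_add_mul (a := x p.1 + p.2 * lam)
    fun ε hε => by
    have := hψS _ (hS p hp ε hε)
    simp only [Prod.fst_add, Prod.snd_add, add_zero] at this
    linarith
  have hlam_pos : 0 < lam := by
    refine hlam_nonneg.lt_of_ne fun hlam => ?_
    have hx : x = 0 := ContinuousLinearMap.eq_zero_of_nonneg_of_zero_mem_qi hqi
      fun _ hd => by
        obtain ⟨q, hq, rfl⟩ := hD hd
        simpa [← hlam] using hψS q hq
    rw [hψ_apply, hx, ← hlam] at hψc
    simp at hψc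
  refine ⟨lam⁻¹ • x, fun q hq => ?_⟩
  have := div_nonneg (hψS q hq) hlam_pos.le
  rwa [add_div, mul_div_cancel_right₀ _ hlam_pos.ne', div_eq_inv_mul] at this

end Multiplier

section Conjugate

variable {X : Type*} [AddCommGroup X] [Module ℝ X] [TopologicalSpace X]

noncomputable def fenchelConjugate (f : X → EReal) (z : X →L[ℝ] ℝ) : EReal :=
  ⨆ x, ((z x : ℝ) : EReal) - f x

theorem coe_sub_le_fenchelConjugate (f : X → EReal) (z : X →L[ℝ] ℝ) (x : X) :
    ((z x : ℝ) : EReal) - f x ≤ fenchelConjugate f z :=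
  le_iSup (fun x => ((z x : ℝ) : EReal) - f x) x

theorem fenchelConjugate_ne_bot {f : X → EReal} {x : X} (hx : f x ≠ ⊤) (z : X →L[ℝ] ℝ) :
    fenchelConjugate f z ≠ ⊥ :=
  ne_bot_of_le_ne_bot (by simp [sub_eq_add_neg, EReal.add_eq_bot_iff, hx])
    (coe_sub_le_fenchelConjugate f z x)

theorem neg_fenchelConjugate_neg_sub_le {f g : X → EReal} {x : X} (hfx : f x ≠ ⊥)
    (hgx : g x ≠ ⊥) (z : X →L[ℝ] ℝ) :
    -fenchelConjugate f (-z) - fenchelConjugate g z ≤ f x + g x := by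
  by_cases htop : f x = ⊤ ∨ g x = ⊤
  · rcases htop with h | h <;> simp [h, hfx, hgx]
  push Not at htop
  lift f x to ℝ using ⟨htop.1, hfx⟩ with a ha
  lift g x to ℝ using ⟨htop.2, hgx⟩ with b hb
  have hf : -fenchelConjugate f (-z) ≤ ((z x + a : ℝ) : EReal) := by
    rw [EReal.neg_le, ← EReal.coe_neg]
    simpa [ha, neg_add_eq_sub] using coe_sub_le_fenchelConjugate f (-z) x
  have hg : ((z x - b : ℝ) : EReal) ≤ fenchelConjugate g z := by
    simpa [hb] using coe_sub_le_fenchelConjugate g z x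
  calc -fenchelConjugate f (-z) - fenchelConjugate g z
      ≤ ((z x + a : ℝ) : EReal) - ((z x - b : ℝ) : EReal) := EReal.sub_le_sub hf hg
    _ = ((a + b : ℝ) : EReal) := by norm_cast; ring_nf

theorem le_neg_fenchelConjugate_neg_sub {f g : X → EReal} {z : X →L[ℝ] ℝ} {c : ℝ}
    (hfbot : ∀ x, f x ≠ ⊥) (hgbot : ∀ y, g y ≠ ⊥) {x₀ y₀ : X}
    (hfx₀ : f x₀ ≠ ⊤) (hgy₀ : g y₀ ≠ ⊤)
    (h : ∀ x y, f x ≠ ⊤ → g y ≠ ⊤ → z y - z x ≤ (f x).toReal + (g y).toReal - c) :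
    (c : EReal) ≤ -fenchelConjugate f (-z) - fenchelConjugate g z := by
  have hsum : fenchelConjugate f (-z) + fenchelConjugate g z ≤ ((-c : ℝ) : EReal) := by
    refine EReal.iSup_add_iSup_le fun x y => ?_
    by_cases htop : f x = ⊤ ∨ g y = ⊤
    · rcases htop with h | h <;> simp [h]
    push Not at htop
    have hxy := h x y htop.1 htop.2
    lift f x to ℝ using ⟨htop.1, hfbot x⟩ with a
    lift g y to ℝ using ⟨htop.2, hgbot y⟩ with b
    norm_cast
    simp only [EReal.toReal_coe, neg_apply] at hxy ⊢
    linarith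
  rw [← EReal.neg_add (.inl (fenchelConjugate_ne_bot hfx₀ _))
    (.inr (fenchelConjugate_ne_bot hgy₀ _))]
  exact EReal.le_neg_of_le_neg (by simpa using hsum)

end Conjugate

section EpiSubHypo

variable {X : Type*} [AddCommGroup X]

/-- The set `epi f − ep̂i (g − v)`. -/
def epiSubHypo (f g : X → EReal) (v : ℝ) : Set (X × ℝ) :=
  {p | ∃ x y : X, ∃ ε : ℝ, 0 ≤ ε ∧ p.1 = x - y ∧
    (p.2 : EReal) = f x + g y - (v : EReal) + (ε : EReal)}

variable {f g : X → EReal} {v : ℝ}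

theorem mem_epiSubHypo {x y : X} (hfx_bot : f x ≠ ⊥) (hgy_bot : g y ≠ ⊥) (hfx : f x ≠ ⊤)
    (hgy : g y ≠ ⊤) : (x - y, (f x).toReal + (g y).toReal - v) ∈ epiSubHypo f g v :=
  ⟨x, y, 0, le_rfl, rfl, by
    rw [← EReal.coe_toReal hfx hfx_bot, ← EReal.coe_toReal hgy hgy_bot]; norm_cast; simp⟩

theorem add_mem_epiSubHypo {p : X × ℝ} (hp : p ∈ epiSubHypo f g v) {ε : ℝ}
    (hε : 0 ≤ ε) :
    p + (0, ε) ∈ epiSubHypo f g v := by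
  obtain ⟨x, y, δ, hδ, h1, h2⟩ := hp
  refine ⟨x, y, δ + ε, add_nonneg hδ hε, by simp [h1], ?_⟩
  rw [Prod.snd_add, EReal.coe_add, h2, EReal.coe_add, add_assoc]

end EpiSubHypo

theorem fenchel_duality_of_qi_qri_general
    {X : Type*} [AddCommGroup X] [Module ℝ X] [TopologicalSpace X]
    [IsTopologicalAddGroup X] [ContinuousSMul ℝ X] [LocallyConvexSpace ℝ X]
    (f g : X → EReal)
    (hfbot : ∀ x, f x ≠ ⊥) (hgbot : ∀ x, g x ≠ ⊥)
    (v : ℝ) (hv : (⨅ x : X, f x + g x) = (v : EReal))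
    (hqi : (0 : X) ∈ qi ({x : X | f x ≠ ⊤} - {x : X | g x ≠ ⊤}))
    (hqri : ((0 : X), (0 : ℝ)) ∉ qri (convexHull ℝ
      ({p : X × ℝ | ∃ x y : X, ∃ ε : ℝ, 0 ≤ ε ∧ p.1 = x - y ∧
        (p.2 : EReal) = f x + g y - (v : EReal) + (ε : EReal)} ∪ {(0, 0)}))) :
    ∃ ystar : X →L[ℝ] ℝ,
      (-(⨆ x : X, (((-ystar) x : ℝ) : EReal) - f x)
        - (⨆ x : X, ((ystar x : ℝ) : EReal) - g x) = (v : EReal)) ∧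
      ∀ zstar : X →L[ℝ] ℝ,
        -(⨆ x : X, (((-zstar) x : ℝ) : EReal) - f x)
          - (⨆ x : X, ((zstar x : ℝ) : EReal) - g x) ≤ (v : EReal) := by
  have hweak (z : X →L[ℝ] ℝ) : -fenchelConjugate f (-z) - fenchelConjugate g z ≤ v :=
    hv ▸ le_iInf fun x => neg_fenchelConjugate_neg_sub_le (hfbot x) (hgbot x) z
  obtain ⟨ys, hys⟩ := exists_clm_nonneg_add_snd_of_zero_notMem_qri (S := epiSubHypo f g v)
    (fun _ hp _ hε => add_mem_epiSubHypo hp hε)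
    (by
      rintro _ ⟨x, hx, y, hy, rfl⟩
      exact ⟨_, mem_epiSubHypo (hfbot x) (hgbot y) hx hy, rfl⟩)
    hqi hqri
  obtain ⟨x₀, hx₀, y₀, hy₀, -⟩ := hqi.1
  refine ⟨ys, le_antisymm (hweak ys)
    (le_neg_fenchelConjugate_neg_sub hfbot hgbot hx₀ hy₀ fun x y hx hy => ?_), hweak⟩
  have := hys _ (mem_epiSubHypo (hfbot x) (hgbot y) hx hy)
  rw [map_sub] at this
  linarith

theorem fenchel_duality_of_qi_qri
    {X : Type*} [AddCommGroup X] [Module ℝ X] [TopologicalSpace X]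
    [IsTopologicalAddGroup X] [ContinuousSMul ℝ X] [LocallyConvexSpace ℝ X] [T2Space X]
    (f g : X → EReal)
    (hfbot : ∀ x, f x ≠ ⊥) (hgbot : ∀ x, g x ≠ ⊥)
    (hfdom : ∃ x, f x ≠ ⊤) (hgdom : ∃ x, g x ≠ ⊤)
    (v : ℝ) (hv : (⨅ x : X, f x + g x) = (v : EReal))
    (hconvE : Convex ℝ {p : X × ℝ | ∃ x y : X, ∃ ε : ℝ, 0 ≤ ε ∧ p.1 = x - y ∧
      (p.2 : EReal) = f x + g y - (v : EReal) + (ε : EReal)})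
    (hqi : (0 : X) ∈ qi ({x : X | f x ≠ ⊤} - {x : X | g x ≠ ⊤}))
    (hqri : ((0 : X), (0 : ℝ)) ∉ qri (convexHull ℝ
      ({p : X × ℝ | ∃ x y : X, ∃ ε : ℝ, 0 ≤ ε ∧ p.1 = x - y ∧
        (p.2 : EReal) = f x + g y - (v : EReal) + (ε : EReal)} ∪ {(0, 0)}))) :
    ∃ ystar : X →L[ℝ] ℝ,
      (-(⨆ x : X, (((-ystar) x : ℝ) : EReal) - f x)
        - (⨆ x : X, ((ystar x : ℝ) : EReal) - g x) = (v : EReal)) ∧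
      ∀ zstar : X →L[ℝ] ℝ,
        -(⨆ x : X, (((-zstar) x : ℝ) : EReal) - f x)
          - (⨆ x : X, ((zstar x : ℝ) : EReal) - g x) ≤ (v : EReal) :=
  fenchel_duality_of_qi_qri_general f g hfbot hgbot v hv hqi hqri
end
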